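/- For each (i,j,k) in {(2,1,3),(2,3,2),(3,1,2),(3,3,3)}, the projected tensor P_{i,j,k}(L) of the Laderman tensor L (zeroing row i/column j in the first slot, row j/column k in the second, row k/column i in the third, and deleting the zero rows and columns) is a 2×2 matrix multiplication tensor of tensor rank 7, i.e. it has at most 7 nonzero rank-one summands and its full contraction against A'⊗B'⊗C' equals ∑_{1≤p,q,r≤2} a'_{pq}b'_{qr}c'_{rp}. -/

import Mathlib

open Matrix

variable {R : Type*} [CommRing R]

abbrev M3 (R : Type*) [CommRing R] := Matrix (Fin 3) (Fin 3) R

/-- The 23 rank-one summands of the Laderman tensor (Laderman 1976; 0-based indices). -/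
def ladermanL (R : Type*) [CommRing R] : Fin 23 → M3 R × M3 R × M3 R :=
  ![(!![1,1,1; -1,-1,0; 0,-1,-1], Matrix.single 1 1 1, Matrix.single 1 0 1),
    (Matrix.single 1 1 1, !![-1,1,0; 1,-1,-1; -1,0,1], Matrix.single 0 1 1),
    (Matrix.single 0 2 1, Matrix.single 2 0 1, !![1,1,1; 1,0,1; 1,1,0]),
    (!![1,1,1; 0,-1,-1; -1,-1,0], Matrix.single 1 2 1, Matrix.single 2 0 1),
    (Matrix.single 2 1 1, !![-1,0,1; 1,-1,-1; -1,1,0], Matrix.single 0 2 1),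
    (Matrix.single 0 0 1, Matrix.single 0 0 1, !![1,1,1; 1,1,0; 1,0,1]),
    (!![-1,0,0; 0,0,0; 1,1,0], !![1,0,-1; 0,0,1; 0,0,0], !![0,0,1; 0,0,0; 1,0,1]),
    (!![0,0,-1; 0,1,1; 0,0,0], !![0,0,0; 0,0,1; 1,0,-1], !![0,1,0; 0,0,0; 1,1,0]),
    (!![-1,0,0; 1,1,0; 0,0,0], !![1,-1,0; 0,1,0; 0,0,0], !![0,1,0; 1,1,0; 0,0,0]),
    (!![0,0,-1; 0,0,0; 0,1,1], !![0,0,0; 0,1,0; 1,-1,0], !![0,0,1; 1,0,1; 0,0,0]),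
    (!![0,0,0; 1,1,0; 0,0,0], !![-1,1,0; 0,0,0; 0,0,0], !![0,0,0; 1,1,0; 0,0,0]),
    (!![0,0,0; 0,0,0; 1,1,0], !![-1,0,1; 0,0,0; 0,0,0], !![0,0,0; 0,0,0; 1,0,1]),
    (!![0,0,1; 0,0,0; 0,0,-1], !![0,0,0; 0,1,0; 0,-1,0], !![0,0,1; 0,0,1; 0,0,0]),
    (!![1,0,0; -1,0,0; 0,0,0], !![0,-1,0; 0,1,0; 0,0,0], !![0,1,0; 0,1,0; 0,0,0]),
    (!![0,0,0; 0,0,0; 0,1,1], !![0,0,0; 0,0,0; -1,1,0], !![0,0,0; 1,0,1; 0,0,0]),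
    (!![-1,0,0; 0,0,0; 1,0,0], !![0,0,1; 0,0,-1; 0,0,0], !![0,0,1; 0,0,0; 0,0,1]),
    (!![0,0,1; 0,0,-1; 0,0,0], !![0,0,0; 0,0,1; 0,0,-1], !![0,1,0; 0,0,0; 0,1,0]),
    (!![0,0,0; 0,1,1; 0,0,0], !![0,0,0; 0,0,0; -1,0,1], !![0,0,0; 0,0,0; 1,1,0]),
    (Matrix.single 0 1 1, Matrix.single 1 0 1, Matrix.single 0 0 1),
    (Matrix.single 1 2 1, Matrix.single 2 1 1, Matrix.single 1 1 1),
    (Matrix.single 1 0 1, Matrix.single 0 2 1, Matrix.single 2 1 1),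
    (Matrix.single 2 0 1, Matrix.single 0 1 1, Matrix.single 1 2 1),
    (Matrix.single 2 2 1, Matrix.single 2 2 1, Matrix.single 2 2 1)]

/-- The projection `P_{i,j}`: zero out row `i` and column `j`, then delete them,
yielding a 2×2 matrix (the increasing embedding `Fin 2 → Fin 3` avoiding `m` is
`m.succAbove`). -/
def projM (i j : Fin 3) (M : M3 R) : Matrix (Fin 2) (Fin 2) R :=
  Matrix.of fun p q => M (i.succAbove p) (j.succAbove q)

set_option maxHeartbeats 1000000 in
/-- For `(i,j,k) ∈ {(2,1,3),(2,3,2),(3,1,2),(3,3,3)}` (0-based below), the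
projected tensor `P_{i,j,k}(L)` of the Laderman tensor has at most 7 nonzero
rank-one summands and computes 2×2 matrix multiplication: its full contraction
against `A'⊗B'⊗C'` equals `∑ₚqᵣ a'ₚq b'qᵣ c'ᵣₚ` — hence it is an (optimal)
2×2 matrix multiplication tensor of rank 7. -/
theorem laderman_projections_are_strassen_like (i j k : Fin 3)
    (h : (i, j, k) ∈ ([(1, 0, 2), (1, 2, 1), (2, 0, 1), (2, 2, 2)] :
      List (Fin 3 × Fin 3 × Fin 3))) :
    ({s : Fin 23 | projM i j (ladermanL R s).1 ≠ 0 ∧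
        projM j k (ladermanL R s).2.1 ≠ 0 ∧
        projM k i (ladermanL R s).2.2 ≠ 0}.ncard ≤ 7) ∧
    ∀ A B C : Matrix (Fin 2) (Fin 2) R,
      (∑ s : Fin 23,
        ((projM i j (ladermanL R s).1)ᵀ * A).trace *
        ((projM j k (ladermanL R s).2.1)ᵀ * B).trace *
        ((projM k i (ladermanL R s).2.2)ᵀ * C).trace)
      = ∑ p : Fin 2, ∑ q : Fin 2, ∑ r : Fin 2, A p q * B q r * C r p := by

  simp only [List.mem_cons, List.not_mem_nil, or_false, Prod.mk.injEq] at h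
  obtain ⟨rfl, rfl, rfl⟩ | ⟨rfl, rfl, rfl⟩ | ⟨rfl, rfl, rfl⟩ | ⟨rfl, rfl, rfl⟩ := h
  · constructor
    · have hsub : {s : Fin 23 | projM (R := R) 1 0 (ladermanL R s).1 ≠ 0 ∧
            projM 0 2 (ladermanL R s).2.1 ≠ 0 ∧
            projM 2 1 (ladermanL R s).2.2 ≠ 0} ⊆
          ↑({0, 2, 4, 9, 12, 14, 18} : Finset (Fin 23)) := by
        intro s hs
        obtain ⟨h1, h2, h3⟩ := hs
        fin_cases s <;>
          first
            | (refine absurd ?_ h1; ext p q; fin_cases p <;> fin_cases q <;> rfl)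
            | (refine absurd ?_ h2; ext p q; fin_cases p <;> fin_cases q <;> rfl)
            | (refine absurd ?_ h3; ext p q; fin_cases p <;> fin_cases q <;> rfl)
            | simp
      calc _ ≤ (↑({0, 2, 4, 9, 12, 14, 18} : Finset (Fin 23)) : Set (Fin 23)).ncard :=
            Set.ncard_le_ncard hsub (Finset.finite_toSet _)
        _ ≤ 7 := by rw [Set.ncard_coe_finset]; decide
    · intro A B C
      simp [Fin.sum_univ_succ, projM, ladermanL, Matrix.trace, Matrix.diag, Matrix.mul_apply,
        Matrix.single, Fin.succAbove, Fin.lt_def, Matrix.vecHead, Matrix.vecTail,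
        Matrix.cons_val', Matrix.cons_val_zero, Matrix.cons_val_one, Matrix.head_cons,
        Matrix.head_fin_const, Matrix.empty_val', Matrix.cons_val_fin_one]
      ring
  · constructor
    · have hsub : {s : Fin 23 | projM (R := R) 1 2 (ladermanL R s).1 ≠ 0 ∧
            projM 2 1 (ladermanL R s).2.1 ≠ 0 ∧
            projM 1 1 (ladermanL R s).2.2 ≠ 0} ⊆
          ↑({3, 4, 5, 6, 11, 15, 18} : Finset (Fin 23)) := by
        intro s hs
        obtain ⟨h1, h2, h3⟩ := hs
        fin_cases s <;>
          first
            | (refine absurd ?_ h1; ext p q; fin_cases p <;> fin_cases q <;> rfl)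
            | (refine absurd ?_ h2; ext p q; fin_cases p <;> fin_cases q <;> rfl)
            | (refine absurd ?_ h3; ext p q; fin_cases p <;> fin_cases q <;> rfl)
            | simp
      calc _ ≤ (↑({3, 4, 5, 6, 11, 15, 18} : Finset (Fin 23)) : Set (Fin 23)).ncard :=
            Set.ncard_le_ncard hsub (Finset.finite_toSet _)
        _ ≤ 7 := by rw [Set.ncard_coe_finset]; decide
    · intro A B C
      simp [Fin.sum_univ_succ, projM, ladermanL, Matrix.trace, Matrix.diag, Matrix.mul_apply,
        Matrix.single, Fin.succAbove, Fin.lt_def, Matrix.vecHead, Matrix.vecTail,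
        Matrix.cons_val', Matrix.cons_val_zero, Matrix.cons_val_one, Matrix.head_cons,
        Matrix.head_fin_const, Matrix.empty_val', Matrix.cons_val_fin_one]
      ring
  · constructor
    · have hsub : {s : Fin 23 | projM (R := R) 2 0 (ladermanL R s).1 ≠ 0 ∧
            projM 0 1 (ladermanL R s).2.1 ≠ 0 ∧
            projM 1 2 (ladermanL R s).2.2 ≠ 0} ⊆
          ↑({1, 2, 3, 7, 16, 17, 18} : Finset (Fin 23)) := by
        intro s hs
        obtain ⟨h1, h2, h3⟩ := hs
        fin_cases s <;>
          first
            | (refine absurd ?_ h1; ext p q; fin_cases p <;> fin_cases q <;> rfl)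
            | (refine absurd ?_ h2; ext p q; fin_cases p <;> fin_cases q <;> rfl)
            | (refine absurd ?_ h3; ext p q; fin_cases p <;> fin_cases q <;> rfl)
            | simp
      calc _ ≤ (↑({1, 2, 3, 7, 16, 17, 18} : Finset (Fin 23)) : Set (Fin 23)).ncard :=
            Set.ncard_le_ncard hsub (Finset.finite_toSet _)
        _ ≤ 7 := by rw [Set.ncard_coe_finset]; decide
    · intro A B C
      simp [Fin.sum_univ_succ, projM, ladermanL, Matrix.trace, Matrix.diag, Matrix.mul_apply,
        Matrix.single, Fin.succAbove, Fin.lt_def, Matrix.vecHead, Matrix.vecTail,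
        Matrix.cons_val', Matrix.cons_val_zero, Matrix.cons_val_one, Matrix.head_cons,
        Matrix.head_fin_const, Matrix.empty_val', Matrix.cons_val_fin_one]
      ring
  · constructor
    · have hsub : {s : Fin 23 | projM (R := R) 2 2 (ladermanL R s).1 ≠ 0 ∧
            projM 2 2 (ladermanL R s).2.1 ≠ 0 ∧
            projM 2 2 (ladermanL R s).2.2 ≠ 0} ⊆
          ↑({0, 1, 5, 8, 10, 13, 18} : Finset (Fin 23)) := by
        intro s hs
        obtain ⟨h1, h2, h3⟩ := hs
        fin_cases s <;>
          first
            | (refine absurd ?_ h1; ext p q; fin_cases p <;> fin_cases q <;> rfl)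
            | (refine absurd ?_ h2; ext p q; fin_cases p <;> fin_cases q <;> rfl)
            | (refine absurd ?_ h3; ext p q; fin_cases p <;> fin_cases q <;> rfl)
            | simp
      calc _ ≤ (↑({0, 1, 5, 8, 10, 13, 18} : Finset (Fin 23)) : Set (Fin 23)).ncard :=
            Set.ncard_le_ncard hsub (Finset.finite_toSet _)
        _ ≤ 7 := by rw [Set.ncard_coe_finset]; decide
    · intro A B C
      simp [Fin.sum_univ_succ, projM, ladermanL, Matrix.trace, Matrix.diag, Matrix.mul_apply,
        Matrix.single, Fin.succAbove, Fin.lt_def, Matrix.vecHead, Matrix.vecTail,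
        Matrix.cons_val', Matrix.cons_val_zero, Matrix.cons_val_one, Matrix.head_cons,
        Matrix.head_fin_const, Matrix.empty_val', Matrix.cons_val_fin_one]
      ring
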